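/- arXiv:0810.2253 — 2 statements merged into one kernel-verified Lean document; each statement's English description precedes it below -/
import Mathlib

section
/- Let p: N → M be smooth, B a diffusion operator on N with projectible symbol lying over η: T*M → TM of constant rank, and fix a diffusion operator A on M with σ^A = η. Then the map sending a smooth function f on M to B(f∘p) − (Af)∘p is a derivation from C∞(M) to C∞(N), where C∞(M) acts on C∞(N) by multiplication via f·g := (f∘p)g. -/
open scoped Manifold

/-! By the chain rule and projectibility, `σ^B(d(f ∘ p), d(g ∘ p)) = η(df, dg) ∘ p`. Both sides are
carré du champ operators, of `B` and of `A` respectively, so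
`B((fg) ∘ p) - (f ∘ p) B(g ∘ p) - (g ∘ p) B(f ∘ p) = (A(fg) - f A g - g A f) ∘ p`,
which rearranges to the Leibniz rule for `f ↦ B(f ∘ p) - (A f) ∘ p`. -/

section ProjectibleSymbol

variable {E : Type*} [NormedAddCommGroup E] [NormedSpace ℝ E]
  {H : Type*} [TopologicalSpace H] {I : ModelWithCorners ℝ E H}
  {M : Type*} [TopologicalSpace M] [ChartedSpace H M]
  {F : Type*} [NormedAddCommGroup F] [NormedSpace ℝ F]
  {H' : Type*} [TopologicalSpace H'] {J : ModelWithCorners ℝ F H'}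
  {N : Type*} [TopologicalSpace N] [ChartedSpace H' N]

theorem mfderiv_comp_apply_symbol_comp {p : N → M} {f g : M → ℝ} {u : N}
    (hp : MDifferentiableAt J I p u) (hf : MDifferentiableAt I 𝓘(ℝ) f (p u))
    (hg : MDifferentiableAt I 𝓘(ℝ) g (p u))
    (σ : (TangentSpace J u →L[ℝ] ℝ) →ₗ[ℝ] TangentSpace J u)
    (η : (TangentSpace I (p u) →L[ℝ] ℝ) →ₗ[ℝ] TangentSpace I (p u))
    (hproj : ∀ α : TangentSpace I (p u) →L[ℝ] ℝ,
      mfderiv J I p u (σ (α.comp (mfderiv J I p u))) = η α) :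
    mfderiv J 𝓘(ℝ) (f ∘ p) u (σ (mfderiv J 𝓘(ℝ) (g ∘ p) u)) =
      mfderiv I 𝓘(ℝ) f (p u) (η (mfderiv I 𝓘(ℝ) g (p u))) := by
  rw [mfderiv_comp u hf hp, mfderiv_comp u hg hp, ContinuousLinearMap.comp_apply]
  exact congrArg (mfderiv I 𝓘(ℝ) f (p u)) (hproj _)

end ProjectibleSymbol

theorem stmt_10_general
    {E : Type*} [NormedAddCommGroup E] [NormedSpace ℝ E]
    {H : Type*} [TopologicalSpace H] {I : ModelWithCorners ℝ E H}
    {M : Type*} [TopologicalSpace M] [ChartedSpace H M]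
    {F : Type*} [NormedAddCommGroup F] [NormedSpace ℝ F]
    {H' : Type*} [TopologicalSpace H'] {J : ModelWithCorners ℝ F H'}
    {N : Type*} [TopologicalSpace N] [ChartedSpace H' N]
    (p : N → M) (hp : ContMDiff J I (⊤ : ℕ∞) p)
    (A : (M → ℝ) →ₗ[ℝ] (M → ℝ)) (B : (N → ℝ) →ₗ[ℝ] (N → ℝ))
    (σB : ∀ u : N, (TangentSpace J u →L[ℝ] ℝ) →ₗ[ℝ] TangentSpace J u)
    (hσB : ∀ f g : N → ℝ, ContMDiff J 𝓘(ℝ) (⊤ : ℕ∞) f → ContMDiff J 𝓘(ℝ) (⊤ : ℕ∞) g → ∀ u : N,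
      mfderiv J 𝓘(ℝ) f u (σB u (mfderiv J 𝓘(ℝ) g u)) =
        (1 / 2 : ℝ) * (B (f * g) u - f u * B g u - g u * B f u))
    (η : ∀ x : M, (TangentSpace I x →L[ℝ] ℝ) →ₗ[ℝ] TangentSpace I x)
    -- `B` has projectible symbol lying over `η`
    (hproj : ∀ (u : N) (α : TangentSpace I (p u) →L[ℝ] ℝ),
      mfderiv J I p u (σB u (α.comp (mfderiv J I p u))) = η (p u) α)
    -- `A` has symbol `η`
    (hσA : ∀ f g : M → ℝ, ContMDiff I 𝓘(ℝ) (⊤ : ℕ∞) f → ContMDiff I 𝓘(ℝ) (⊤ : ℕ∞) g → ∀ x : M,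
      mfderiv I 𝓘(ℝ) f x (η x (mfderiv I 𝓘(ℝ) g x)) =
        (1 / 2 : ℝ) * (A (f * g) x - f x * A g x - g x * A f x)) :
    ∀ f g : M → ℝ, ContMDiff I 𝓘(ℝ) (⊤ : ℕ∞) f → ContMDiff I 𝓘(ℝ) (⊤ : ℕ∞) g → ∀ u : N,
      (B ((f * g) ∘ p) u - A (f * g) (p u)) =
        (B (f ∘ p) u - A f (p u)) * g (p u) + f (p u) * (B (g ∘ p) u - A g (p u)) := by
  intro f g hf hg u
  have hΓ : (1 / 2 : ℝ) * (B ((f ∘ p) * (g ∘ p)) u - f (p u) * B (g ∘ p) u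
        - g (p u) * B (f ∘ p) u) =
      (1 / 2 : ℝ) * (A (f * g) (p u) - f (p u) * A g (p u) - g (p u) * A f (p u)) :=
    (hσB _ _ (hf.comp hp) (hg.comp hp) u).symm.trans <|
      (mfderiv_comp_apply_symbol_comp (hp.mdifferentiableAt (by simp))
        (hf.mdifferentiableAt (by simp)) (hg.mdifferentiableAt (by simp))
        (σB u) (η (p u)) (hproj u)).trans (hσA f g hf hg (p u))
  rw [show (f * g) ∘ p = (f ∘ p) * (g ∘ p) from rfl]
  linear_combination 2 * hΓ

/-- **The defect of a projectible-symbol operator over a reference operator is a derivation.**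
Let `p : N → M` be smooth, `B` a diffusion operator on `N` whose symbol is projectible, lying
over `η : T*M → TM` of constant rank, and let `A` be a diffusion operator on `M` with
`σ^A = η`.  Then the map `f ↦ B (f ∘ p) − (A f) ∘ p` is a derivation from `C^∞(M)` to
`C^∞(N)`, where `C^∞(M)` acts on `C^∞(N)` by multiplication via `f · g := (f ∘ p) g`. -/
theorem stmt_10
    {E : Type*} [NormedAddCommGroup E] [NormedSpace ℝ E]
    {H : Type*} [TopologicalSpace H] {I : ModelWithCorners ℝ E H}
    {M : Type*} [TopologicalSpace M] [ChartedSpace H M] [IsManifold I (⊤ : ℕ∞) M]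
    {F : Type*} [NormedAddCommGroup F] [NormedSpace ℝ F]
    {H' : Type*} [TopologicalSpace H'] {J : ModelWithCorners ℝ F H'}
    {N : Type*} [TopologicalSpace N] [ChartedSpace H' N] [IsManifold J (⊤ : ℕ∞) N]
    (p : N → M) (hp : ContMDiff J I (⊤ : ℕ∞) p)
    (A : (M → ℝ) →ₗ[ℝ] (M → ℝ)) (B : (N → ℝ) →ₗ[ℝ] (N → ℝ))
    (hA1 : A (fun _ => (1 : ℝ)) = fun _ => 0)
    (hB1 : B (fun _ => (1 : ℝ)) = fun _ => 0)
    (σB : ∀ u : N, (TangentSpace J u →L[ℝ] ℝ) →ₗ[ℝ] TangentSpace J u)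
    (hσB : ∀ f g : N → ℝ, ContMDiff J 𝓘(ℝ) (⊤ : ℕ∞) f → ContMDiff J 𝓘(ℝ) (⊤ : ℕ∞) g → ∀ u : N,
      mfderiv J 𝓘(ℝ) f u (σB u (mfderiv J 𝓘(ℝ) g u)) =
        (1 / 2 : ℝ) * (B (f * g) u - f u * B g u - g u * B f u))
    (η : ∀ x : M, (TangentSpace I x →L[ℝ] ℝ) →ₗ[ℝ] TangentSpace I x)
    (hη_pos : ∀ (x : M) (α : TangentSpace I x →L[ℝ] ℝ), 0 ≤ α (η x α))
    (hη_rank : ∃ r : ℕ, ∀ x : M, Module.finrank ℝ ↥(LinearMap.range (η x)) = r)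
    -- `B` has projectible symbol lying over `η`
    (hproj : ∀ (u : N) (α : TangentSpace I (p u) →L[ℝ] ℝ),
      mfderiv J I p u (σB u (α.comp (mfderiv J I p u))) = η (p u) α)
    -- `A` has symbol `η`
    (hσA : ∀ f g : M → ℝ, ContMDiff I 𝓘(ℝ) (⊤ : ℕ∞) f → ContMDiff I 𝓘(ℝ) (⊤ : ℕ∞) g → ∀ x : M,
      mfderiv I 𝓘(ℝ) f x (η x (mfderiv I 𝓘(ℝ) g x)) =
        (1 / 2 : ℝ) * (A (f * g) x - f x * A g x - g x * A f x)) :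
    ∀ f g : M → ℝ, ContMDiff I 𝓘(ℝ) (⊤ : ℕ∞) f → ContMDiff I 𝓘(ℝ) (⊤ : ℕ∞) g → ∀ u : N,
      (B ((f * g) ∘ p) u - A (f * g) (p u)) =
        (B (f ∘ p) u - A f (p u)) * g (p u) + f (p u) * (B (g ∘ p) u - A g (p u)) :=
  stmt_10_general p hp A B σB hσB η hproj hσA
end

section
/- Let (Ω, F, (F_t), P) be a filtered probability space and (G_t) a sub-filtration of (F_t) with G = ∨_s G_s, satisfying E[A | G_s] = E[E[A | F_s] | G] for all integrable F-measurable A and all s ≥ 0. Then: (i) if (M_t) is an (F_t)-martingale, then (E[M_t | G])_t is a (G_t)-martingale; (ii) for all G-measurable integrable H, E[H | F_s] = E[H | G_s]; (iii) E[E[A | F_s] | G] = E[E[A | G] | F_s] for all integrable A. -/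
/-!
Conditional expectation onto a sub-σ-algebra is self-adjoint: `∫ E[f | m] g = ∫ f E[g | m]`.
For `G = ⋁ G_t`-measurable `H` and `B ∈ F_s`, the hypothesis applied to `1_B` gives
`E[1_B | G_s] = E[1_B | G]`, so moving the conditional expectations across,
`∫_B E[H | G_s] = ∫ H E[1_B | G_s] = ∫ H E[1_B | G] = ∫_B H`, which is (ii).
Part (i) is the tower property followed by the hypothesis, and (iii) is (ii) applied to
`H = E[A | G]`, with both sides reduced to `E[A | G_s]`.
-/

open MeasureTheory
open scoped NNReal

namespace MeasureTheory

variable {Ω : Type*} {m0 : MeasurableSpace Ω} {μ : Measure Ω} [IsFiniteMeasure μ]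

theorem integral_condExp_mul_eq_integral_mul_condExp {m : MeasurableSpace Ω} (hm : m ≤ m0)
    {f g : Ω → ℝ} {R : ℝ} (hf : Integrable f μ) (hg : AEStronglyMeasurable[m0] g μ)
    (hgR : ∀ᵐ x ∂μ, ‖g x‖ ≤ R) :
    ∫ x, (μ[f | m] * g) x ∂μ = ∫ x, (f * μ[g | m]) x ∂μ := by
  have hgi : Integrable g μ := .of_bound hg R hgR
  have hcg : AEStronglyMeasurable[m0] (μ[g | m]) μ := integrable_condExp.aestronglyMeasurable
  calc ∫ x, (μ[f | m] * g) x ∂μ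
      = ∫ x, (μ[μ[f | m] * g | m]) x ∂μ := (integral_condExp hm).symm
    _ = ∫ x, (μ[f | m] * μ[g | m]) x ∂μ :=
        integral_congr_ae <| condExp_mul_of_stronglyMeasurable_left stronglyMeasurable_condExp
          (integrable_condExp.mul_bdd hg hgR) hgi
    _ = ∫ x, (μ[μ[g | m] * f | m]) x ∂μ := by
        rw [mul_comm]
        exact integral_congr_ae <| (condExp_mul_of_stronglyMeasurable_left
          stronglyMeasurable_condExp (hf.bdd_mul hcg (ae_bdd_norm_condExp_of_ae_bdd_norm hgR))
          hf).symm
    _ = ∫ x, (f * μ[g | m]) x ∂μ := by rw [integral_condExp hm, mul_comm]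

theorem condExp_ae_eq_condExp_of_condExp_indicator_ae_eq {m₁ m₂ m₃ : MeasurableSpace Ω}
    (h₁₂ : m₁ ≤ m₂) (h₂ : m₂ ≤ m0) (h₃ : m₃ ≤ m0)
    (hind : ∀ B, MeasurableSet[m₂] B →
      μ[B.indicator (1 : Ω → ℝ) | m₁] =ᵐ[μ] μ[B.indicator (1 : Ω → ℝ) | m₃])
    {H : Ω → ℝ} (hH : Integrable H μ) (hHm : StronglyMeasurable[m₃] H) :
    μ[H | m₂] =ᵐ[μ] μ[H | m₁] := by
  refine (ae_eq_condExp_of_forall_setIntegral_eq h₂ hH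
    (fun _ _ _ => integrable_condExp.integrableOn) (fun B hB _ => ?_)
    (stronglyMeasurable_condExp.mono h₁₂).aestronglyMeasurable).symm
  set χ := B.indicator (1 : Ω → ℝ)
  have hB₀ : MeasurableSet[m0] B := h₂ B hB
  have hχ : AEStronglyMeasurable[m0] χ μ := aestronglyMeasurable_one.indicator hB₀
  have hχ1 : ∀ᵐ x ∂μ, ‖χ x‖ ≤ 1 :=
    .of_forall fun x => (norm_indicator_le_norm_self _ x).trans (by simp)
  have hsetIntegral (h : Ω → ℝ) : ∫ x in B, h x ∂μ = ∫ x, (h * χ) x ∂μ := by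
    rw [← integral_indicator hB₀]
    congr 1 with x
    by_cases hx : x ∈ B <;> simp [χ, hx]
  calc ∫ x in B, (μ[H | m₁]) x ∂μ
      = ∫ x, (H * μ[χ | m₁]) x ∂μ := by
        rw [hsetIntegral, integral_condExp_mul_eq_integral_mul_condExp (h₁₂.trans h₂) hH hχ hχ1]
    _ = ∫ x, (H * μ[χ | m₃]) x ∂μ := integral_congr_ae (.mul .rfl (hind B hB))
    _ = ∫ x in B, H x ∂μ := by
        rw [← integral_condExp_mul_eq_integral_mul_condExp h₃ hH hχ hχ1,
          condExp_of_stronglyMeasurable h₃ hHm hH, hsetIntegral]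

end MeasureTheory

/-- **A commutation lemma for conditional expectations along a sub-filtration.**
Let `(Ω, F, (F_t), P)` be a filtered probability space and `(G_t)` a sub-filtration of
`(F_t)` with `G = ⋁_s G_s`, satisfying `E[A | G_s] = E[E[A | F_s] | G]` for all integrable
`A` and all `s ≥ 0`.  Then:
(i) if `(M_t)` is an `(F_t)`-martingale then `(E[M_t | G])_t` is a `(G_t)`-martingale;
(ii) for all `G`-measurable integrable `H`, `E[H | F_s] = E[H | G_s]`;
(iii) `E[E[A | F_s] | G] = E[E[A | G] | F_s]` for all integrable `A`. -/
theorem stmt_17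
    {Ω : Type*} {m0 : MeasurableSpace Ω} {μ : Measure Ω} [IsProbabilityMeasure μ]
    (F G : Filtration ℝ≥0 m0)
    (hGF : ∀ t : ℝ≥0, G t ≤ F t)
    (hcond : ∀ A : Ω → ℝ, Integrable A μ → ∀ s : ℝ≥0,
      μ[A | G s] =ᵐ[μ] μ[ μ[A | F s] | ⨆ t : ℝ≥0, G t ]) :
    (∀ M : ℝ≥0 → Ω → ℝ, Martingale M F μ → ∀ s t : ℝ≥0, s ≤ t →
        μ[ μ[M t | ⨆ r : ℝ≥0, G r] | G s ] =ᵐ[μ] μ[M s | ⨆ r : ℝ≥0, G r]) ∧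
    (∀ H : Ω → ℝ, Integrable H μ → StronglyMeasurable[⨆ r : ℝ≥0, G r] H →
        ∀ s : ℝ≥0, μ[H | F s] =ᵐ[μ] μ[H | G s]) ∧
    (∀ A : Ω → ℝ, Integrable A μ → ∀ s : ℝ≥0,
        μ[ μ[A | F s] | ⨆ r : ℝ≥0, G r ] =ᵐ[μ] μ[ μ[A | ⨆ r : ℝ≥0, G r] | F s ]) := by
  have hG : ⨆ r, G r ≤ m0 := iSup_le G.le
  have hGs (s : ℝ≥0) : G s ≤ ⨆ r, G r := le_iSup G s
  have hindicator (s : ℝ≥0) (B : Set Ω) (hB : MeasurableSet[F s] B) :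
      μ[B.indicator (1 : Ω → ℝ) | G s] =ᵐ[μ] μ[B.indicator 1 | ⨆ r, G r] := by
    have hB₀ : MeasurableSet[m0] B := F.le s B hB
    refine (hcond _ ((integrable_const 1).indicator hB₀) s).trans ?_
    rw [condExp_of_stronglyMeasurable (F.le s) (stronglyMeasurable_one.indicator hB)
      ((integrable_const 1).indicator hB₀)]
  have part2 : ∀ H : Ω → ℝ, Integrable H μ → StronglyMeasurable[⨆ r, G r] H →
      ∀ s, μ[H | F s] =ᵐ[μ] μ[H | G s] := fun H hH hHm s =>
    condExp_ae_eq_condExp_of_condExp_indicator_ae_eq (hGF s) (F.le s) hG (hindicator s) hH hHm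
  refine ⟨fun M hM s t hst => ?_, part2, fun A hA s => ?_⟩
  · calc μ[μ[M t | ⨆ r, G r] | G s]
        =ᵐ[μ] μ[M t | G s] := condExp_condExp_of_le (hGs s) hG
      _ =ᵐ[μ] μ[μ[M t | F s] | ⨆ r, G r] := hcond (M t) (hM.integrable t) s
      _ =ᵐ[μ] μ[M s | ⨆ r, G r] := condExp_congr_ae (hM.condExp_ae_eq hst)
  · calc μ[μ[A | F s] | ⨆ r, G r]
        =ᵐ[μ] μ[A | G s] := (hcond A hA s).symm
      _ =ᵐ[μ] μ[μ[A | ⨆ r, G r] | G s] := (condExp_condExp_of_le (hGs s) hG).symm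
      _ =ᵐ[μ] μ[μ[A | ⨆ r, G r] | F s] :=
        (part2 _ integrable_condExp stronglyMeasurable_condExp s).symm
end
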